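/- arXiv:1302.0402 — 3 statements merged into one kernel-verified Lean document; each statement's English description precedes it below -/
import Mathlib

section
/- Let ν be a positive Radon measure on (0,∞) with ∫_{(0,∞)} (1+r)^{−1} ν(dr) < ∞, and define β(p) = p ∫_{(0,∞)} (p+r)^{−1} ν(dr) for complex p with Re p ≥ 0, p ≠ 0. Then for every fixed φ ∈ [−π/2, π/2], the function R ↦ Re β(R e^{iφ}) is non-decreasing on (0,∞). -/
open MeasureTheory Set Real

/-!
Write `p = R w` with `Re w ≥ 0`. For each `r > 0`,
`Re (p / (p + r)) = (R² |w|² + R r Re w) / (R² |w|² + 2 R r Re w + r²)`, and after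
cross-multiplying, the difference between the values at `R₂` and `R₁` factors as `(R₂ - R₁)` times
a polynomial with nonnegative terms. Since `Re β(p) = ∫ Re (p / (p + r)) dν`, monotonicity
passes to the integral. The integral exists because `|p + r| ≥ (|p| + r) / 2 ≥ min(|p|, 1) (1 + r) / 2`.
-/

namespace Complex

lemma norm_add_ofReal_le_two_mul_norm_add {p : ℂ} (hp : 0 ≤ p.re) {r : ℝ} (hr : 0 ≤ r) :
    ‖p‖ + r ≤ 2 * ‖p + r‖ := by
  have hsq : ‖p‖ ^ 2 + r ^ 2 ≤ ‖p + r‖ ^ 2 := by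
    rw [Complex.sq_norm, Complex.sq_norm, normSq_apply, normSq_apply]
    simp only [add_re, add_im, ofReal_re, ofReal_im, add_zero]
    nlinarith [mul_nonneg hp hr]
  nlinarith [norm_nonneg p, norm_nonneg (p + r), sq_nonneg (‖p‖ - r)]

lemma norm_inv_add_ofReal_le {p : ℂ} (hp₀ : p ≠ 0) (hp : 0 ≤ p.re) {r : ℝ} (hr : 0 ≤ r) :
    ‖(p + r)⁻¹‖ ≤ 2 * (min ‖p‖ 1)⁻¹ * (1 + r)⁻¹ := by
  have hm : 0 < min ‖p‖ 1 := lt_min (norm_pos_iff.mpr hp₀) one_pos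
  have hmin : min ‖p‖ 1 * (1 + r) ≤ ‖p‖ + r := by
    nlinarith [min_le_left ‖p‖ 1, min_le_right ‖p‖ 1]
  calc ‖(p + r)⁻¹‖ = ‖p + r‖⁻¹ := norm_inv _
    _ ≤ (min ‖p‖ 1 * (1 + r) / 2)⁻¹ :=
      inv_anti₀ (by positivity) (by linarith [norm_add_ofReal_le_two_mul_norm_add hp hr])
    _ = 2 * (min ‖p‖ 1)⁻¹ * (1 + r)⁻¹ := by field_simp

lemma re_mul_inv_add_ofReal (p : ℂ) (r : ℝ) :
    (p * (p + r)⁻¹).re = (normSq p + r * p.re) / normSq (p + r) := by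
  simp only [mul_re, inv_re, inv_im, add_re, add_im, ofReal_re, ofReal_im, add_zero, normSq_apply]
  ring

lemma re_ofReal_mul_mul_inv_add_ofReal (w : ℂ) (R r : ℝ) :
    (R * w * (R * w + r)⁻¹).re =
      (R ^ 2 * normSq w + R * r * w.re) / (R ^ 2 * normSq w + 2 * R * r * w.re + r ^ 2) := by
  rw [re_mul_inv_add_ofReal]
  simp only [normSq_apply, mul_re, mul_im, add_re, add_im, ofReal_re, ofReal_im]
  congr 1 <;> ring

lemma re_ofReal_mul_mul_inv_add_ofReal_le {w : ℂ} (hw : 0 ≤ w.re) {r : ℝ} (hr : 0 < r)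
    {R₁ R₂ : ℝ} (hR₁ : 0 < R₁) (hR₁₂ : R₁ ≤ R₂) :
    (R₁ * w * (R₁ * w + r)⁻¹).re ≤ (R₂ * w * (R₂ * w + r)⁻¹).re := by
  rw [re_ofReal_mul_mul_inv_add_ofReal, re_ofReal_mul_mul_inv_add_ofReal]
  have hR₂ : 0 < R₂ := hR₁.trans_le hR₁₂
  have hm : 0 ≤ normSq w := normSq_nonneg w
  rw [div_le_div_iff₀ (by positivity) (by positivity), ← sub_nonneg]
  have hR : 0 ≤ R₂ - R₁ := sub_nonneg.mpr hR₁₂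
  have key : (R₂ ^ 2 * normSq w + R₂ * r * w.re) * (R₁ ^ 2 * normSq w + 2 * R₁ * r * w.re + r ^ 2)
      - (R₁ ^ 2 * normSq w + R₁ * r * w.re) * (R₂ ^ 2 * normSq w + 2 * R₂ * r * w.re + r ^ 2)
      = (R₂ - R₁) * (R₁ * R₂ * r * normSq w * w.re + (R₁ + R₂) * r ^ 2 * normSq w
          + r ^ 3 * w.re) := by
    ring
  rw [key]
  positivity

end Complex

section Integral

variable {μ : Measure ℝ}

lemma integrable_inv_add_ofReal (hμ : Integrable (fun r : ℝ => (1 + r)⁻¹) μ)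
    (hμ₀ : ∀ᵐ r ∂μ, 0 ≤ r) {p : ℂ} (hp₀ : p ≠ 0) (hp : 0 ≤ p.re) :
    Integrable (fun r : ℝ => (p + r)⁻¹) μ := by
  refine (hμ.const_mul (2 * (min ‖p‖ 1)⁻¹)).mono'
    (measurable_const.add Complex.measurable_ofReal).inv.aestronglyMeasurable ?_
  filter_upwards [hμ₀] with r hr using Complex.norm_inv_add_ofReal_le hp₀ hp hr

lemma monotoneOn_re_ofReal_mul_mul_integral_inv_add
    (hμ : Integrable (fun r : ℝ => (1 + r)⁻¹) μ) (hμ₀ : ∀ᵐ r ∂μ, 0 < r) {w : ℂ} (hw₀ : w ≠ 0)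
    (hw : 0 ≤ w.re) :
    MonotoneOn (fun R : ℝ => (R * w * ∫ r, ((R * w : ℂ) + r)⁻¹ ∂μ).re) (Ioi 0) := by
  have hint : ∀ R : ℝ, 0 < R → Integrable (fun r : ℝ => R * w * ((R * w : ℂ) + r)⁻¹) μ := by
    intro R hR
    refine (integrable_inv_add_ofReal hμ (hμ₀.mono fun r hr => hr.le) ?_ ?_).const_mul _
    · exact mul_ne_zero (Complex.ofReal_ne_zero.mpr hR.ne') hw₀
    · simpa [Complex.re_ofReal_mul] using mul_nonneg hR.le hw
  intro R₁ hR₁ R₂ hR₂ hR₁₂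
  simp only [← integral_const_mul, ← RCLike.re_to_complex]
  rw [← integral_re (hint _ hR₁), ← integral_re (hint _ hR₂)]
  refine integral_mono_ae (hint _ hR₁).re (hint _ hR₂).re ?_
  filter_upwards [hμ₀] with r hr
  exact Complex.re_ofReal_mul_mul_inv_add_ofReal_le hw hr hR₁ hR₁₂

end Integral

/-- For the dispersion-attenuation function
`β(p) = p ∫_{(0,∞)} (p+r)⁻¹ ν(dr)` of a positive Radon measure `ν` on `(0,∞)` with
`∫ (1+r)⁻¹ ν(dr) < ∞`, and every fixed `φ ∈ [-π/2, π/2]`, the function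
`R ↦ Re β(R e^{iφ})` is non-decreasing on `(0,∞)`. -/
theorem stmt6 (ν : Measure ℝ)
    (hν : (∫⁻ r in Ioi (0:ℝ), ENNReal.ofReal ((1 + r)⁻¹) ∂ν) < ⊤)
    (β : ℂ → ℂ)
    (hβ : ∀ p : ℂ, β p = p * ∫ r in Ioi (0:ℝ), (p + (r : ℂ))⁻¹ ∂ν)
    (φ : ℝ) (hφ : φ ∈ Icc (-(π / 2)) (π / 2)) :
    MonotoneOn (fun R : ℝ => (β ((R : ℂ) * Complex.exp (φ * Complex.I))).re) (Ioi 0) := by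
  have hpos : ∀ᵐ r ∂ν.restrict (Ioi 0), 0 < r := ae_restrict_mem measurableSet_Ioi
  have hint : Integrable (fun r : ℝ => (1 + r)⁻¹) (ν.restrict (Ioi 0)) :=
    (lintegral_ofReal_ne_top_iff_integrable (by fun_prop)
      (hpos.mono fun r hr => by positivity)).mp hν.ne
  have hw : 0 ≤ (Complex.exp (φ * Complex.I)).re := by
    rw [Complex.exp_ofReal_mul_I_re]
    exact cos_nonneg_of_mem_Icc hφ
  simp only [hβ]
  exact monotoneOn_re_ofReal_mul_mul_integral_inv_add hint hpos (Complex.exp_ne_zero _) hw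
end

section
/- Let ρ > 0, let μ be a nonzero positive Radon measure on [0,∞) with ∫_{[0,∞)} (1+r)^{−1} μ(dr) < ∞, and define Q(p) = p ∫_{[0,∞)} (p+r)^{−1} μ(dr) and κ(p) = ρ^{1/2} p / Q(p)^{1/2} for complex p with Re p ≥ 0, p ≠ 0, where the square root is the principal branch. Set G₀ = μ([0,∞)) ∈ (0,∞]. Then κ(p)/p → (ρ/G₀)^{1/2} as |p| → ∞ in the closed right half-plane (with the limit equal to 0 when G₀ = ∞), uniformly with respect to arg p ∈ [−π/2, π/2]. -/
open MeasureTheory Set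
open Filter Topology Bornology

/-!
Write `Q p = ∫ p (p + r)⁻¹ dμ(r)`. In the closed right half-plane the integrand has modulus at
most `1` and nonnegative real part, and it tends to `1` as `|p| → ∞`. If `G₀ < ∞`, dominated
convergence gives `Q p → G₀ > 0`, and continuity of the principal square root at `G₀` gives
`κ p / p = √ρ / Q(p)^{1/2} → √(ρ/G₀)`. If `G₀ = ∞`, `Re Q p` dominates the integral over
`[0, T]`, which tends to `μ [0, T]` (finite by the integrability condition and arbitrarily large);
so `|Q p| → ∞` and `κ p / p → 0`. Uniformity in `arg p` is built in by taking all limits along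
`cobounded ℂ ⊓ 𝓟 {p | 0 ≤ p.re}`.
-/

namespace Complex

variable {p : ℂ} {r : ℝ}

lemma norm_le_norm_add_ofReal (hp : 0 ≤ p.re) (hr : 0 ≤ r) : ‖p‖ ≤ ‖p + r‖ := by
  rw [norm_def, norm_def, normSq_apply, normSq_apply]
  apply Real.sqrt_le_sqrt
  simp only [add_re, add_im, ofReal_re, ofReal_im, add_zero]
  nlinarith

lemma le_norm_add_ofReal (hp : 0 ≤ p.re) : r ≤ ‖p + r‖ :=
  calc r ≤ (p + r).re := by simpa using hp
    _ ≤ ‖p + r‖ := re_le_norm _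

lemma norm_mul_inv_add_ofReal_le_one (hp : 0 ≤ p.re) (hr : 0 ≤ r) :
    ‖p * (p + r)⁻¹‖ ≤ 1 := by
  rw [norm_mul, norm_inv, ← div_eq_mul_inv]
  exact div_le_one_of_le₀ (norm_le_norm_add_ofReal hp hr) (norm_nonneg _)

lemma norm_mul_inv_add_ofReal_le (hp : 0 ≤ p.re) (hr : 0 ≤ r) :
    ‖p * (p + r)⁻¹‖ ≤ 2 * (‖p‖ + 1) * (1 + r)⁻¹ := by
  rcases eq_or_ne p 0 with rfl | hp0
  · rw [zero_mul, norm_zero]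
    exact mul_nonneg (by positivity) (inv_nonneg.2 (by linarith))
  have hpr := norm_le_norm_add_ofReal hp hr
  have hpr' : 0 < ‖p + r‖ := (norm_pos_iff.2 hp0).trans_le hpr
  have hrpr := le_norm_add_ofReal (r := r) hp
  rw [norm_mul, norm_inv, ← div_eq_mul_inv, ← div_eq_mul_inv, div_le_div_iff₀ hpr' (by linarith)]
  nlinarith [norm_nonneg p]

lemma re_mul_inv_add_ofReal_nonneg (hp : 0 ≤ p.re) (hr : 0 ≤ r) :
    0 ≤ (p * (p + r)⁻¹).re := by
  rw [← div_eq_mul_inv, div_re]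
  simp only [add_re, add_im, ofReal_re, ofReal_im, add_zero]
  have hre : 0 ≤ p.re * (p.re + r) := mul_nonneg hp (by linarith)
  exact add_nonneg (div_nonneg hre (normSq_nonneg _))
    (div_nonneg (mul_self_nonneg _) (normSq_nonneg _))

lemma tendsto_mul_inv_add_ofReal_cobounded (r : ℝ) :
    Tendsto (fun p : ℂ => p * (p + r)⁻¹) (cobounded ℂ) (𝓝 1) := by
  have hlim : Tendsto (fun p : ℂ => (1 + r * p⁻¹)⁻¹) (cobounded ℂ) (𝓝 1) := by
    simpa using ((tendsto_inv₀_cobounded.const_mul (r : ℂ)).const_add 1).inv₀ (by simp)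
  refine hlim.congr' ?_
  filter_upwards [(tendsto_norm_cobounded_atTop.eventually_gt_atTop 0)] with p hp
  rw [norm_pos_iff] at hp
  field_simp

lemma norm_cpow_one_half (z : ℂ) : ‖z ^ (1 / 2 : ℂ)‖ = √‖z‖ := by
  rw [show (1 / 2 : ℂ) = ((1 / 2 : ℝ) : ℂ) by push_cast; rfl, norm_cpow_real, Real.sqrt_eq_rpow]

end Complex

section SpectralIntegral

variable {ν : Measure ℝ}

lemma integrable_inv_one_add (hν0 : ∀ᵐ r ∂ν, 0 ≤ r)
    (hν : ∫⁻ r, ENNReal.ofReal (1 + r)⁻¹ ∂ν < ⊤) : Integrable (fun r : ℝ => (1 + r)⁻¹) ν := by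
  refine ⟨(measurable_const.add measurable_id).inv.aestronglyMeasurable, ?_⟩
  rw [hasFiniteIntegral_iff_ofReal (hν0.mono fun r hr => by positivity)]
  exact hν

lemma measure_Iic_ne_top (hν0 : ∀ᵐ r ∂ν, 0 ≤ r)
    (hν : ∫⁻ r, ENNReal.ofReal (1 + r)⁻¹ ∂ν < ⊤) {T : ℝ} (hT : 0 ≤ T) : ν (Iic T) ≠ ⊤ := by
  refine (ENNReal.lt_top_of_mul_ne_top_right (a := ENNReal.ofReal (1 + T)⁻¹) (LT.lt.ne ?_)
    (by simp; positivity)).ne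
  calc ENNReal.ofReal (1 + T)⁻¹ * ν (Iic T) = ∫⁻ _ in Iic T, ENNReal.ofReal (1 + T)⁻¹ ∂ν :=
        (setLIntegral_const _ _).symm
    _ ≤ ∫⁻ r in Iic T, ENNReal.ofReal (1 + r)⁻¹ ∂ν := by
        refine setLIntegral_mono_ae' measurableSet_Iic (hν0.mono fun r hr hrT => ?_)
        gcongr
        exact hrT
    _ ≤ ∫⁻ r, ENNReal.ofReal (1 + r)⁻¹ ∂ν := setLIntegral_le_lintegral _ _
    _ < ⊤ := hν

lemma integrable_mul_inv_add_ofReal (hν0 : ∀ᵐ r ∂ν, 0 ≤ r)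
    (hν : ∫⁻ r, ENNReal.ofReal (1 + r)⁻¹ ∂ν < ⊤) {p : ℂ} (hp : 0 ≤ p.re) :
    Integrable (fun r : ℝ => p * (p + r)⁻¹) ν := by
  refine ((integrable_inv_one_add hν0 hν).const_mul (2 * (‖p‖ + 1))).mono'
    (by fun_prop) (hν0.mono fun r hr => ?_)
  simpa [mul_assoc] using Complex.norm_mul_inv_add_ofReal_le hp hr

theorem tendsto_integral_mul_inv_add_ofReal [IsFiniteMeasure ν] (hν0 : ∀ᵐ r ∂ν, 0 ≤ r) :
    Tendsto (fun p : ℂ => ∫ r, p * (p + r)⁻¹ ∂ν) (cobounded ℂ ⊓ 𝓟 {p | 0 ≤ p.re})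
      (𝓝 (ν.real univ)) := by
  have : (cobounded ℂ).IsCountablyGenerated := comap_norm_atTop (E := ℂ) ▸ inferInstance
  have h := tendsto_integral_filter_of_dominated_convergence (μ := ν)
    (l := cobounded ℂ ⊓ 𝓟 {p | 0 ≤ p.re}) (F := fun (p : ℂ) (r : ℝ) => p * (p + r)⁻¹)
    (f := fun _ => 1) (fun _ => 1) (Eventually.of_forall fun p => by fun_prop)
    (eventually_inf_principal.2 <| Eventually.of_forall fun p hp =>
      hν0.mono fun r hr => Complex.norm_mul_inv_add_ofReal_le_one hp hr)
    (integrable_const 1)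
    (Eventually.of_forall fun r =>
      (Complex.tendsto_mul_inv_add_ofReal_cobounded r).mono_left inf_le_left)
  simpa using h

theorem tendsto_re_integral_mul_inv_add_ofReal_atTop (hν0 : ∀ᵐ r ∂ν, 0 ≤ r)
    (hν : ∫⁻ r, ENNReal.ofReal (1 + r)⁻¹ ∂ν < ⊤) (htop : ν univ = ⊤) :
    Tendsto (fun p : ℂ => (∫ r, p * (p + r)⁻¹ ∂ν).re) (cobounded ℂ ⊓ 𝓟 {p | 0 ≤ p.re})
      atTop := by
  refine tendsto_atTop.2 fun b => ?_
  obtain ⟨T, hT0, hbT⟩ : ∃ T, 0 ≤ T ∧ ENNReal.ofReal |b| < ν (Iic T) := by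
    have h := tendsto_measure_Iic_atTop ν
    rw [htop] at h
    exact ((h.eventually (lt_mem_nhds ENNReal.ofReal_lt_top)).and (eventually_ge_atTop 0)).exists
      |>.imp fun T h => ⟨h.2, h.1⟩
  have hT := measure_Iic_ne_top hν0 hν hT0
  have hbT' : b < ν.real (Iic T) :=
    (le_abs_self b).trans_lt ((ENNReal.ofReal_lt_iff_lt_toReal (abs_nonneg b) hT).1 hbT)
  have := isFiniteMeasure_restrict.2 hT
  have hlim := tendsto_integral_mul_inv_add_ofReal (ν := ν.restrict (Iic T))
    (ae_restrict_of_ae hν0)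
  rw [measureReal_restrict_apply_univ] at hlim
  filter_upwards [((Complex.continuous_re.tendsto _).comp hlim).eventually (lt_mem_nhds hbT'),
    mem_inf_of_right (mem_principal_self _)] with p hbp (hp : 0 ≤ p.re)
  have hI := integrable_mul_inv_add_ofReal hν0 hν hp
  calc b ≤ (∫ r in Iic T, p * (p + r)⁻¹ ∂ν).re := by simpa using hbp.le
    _ = ∫ r in Iic T, (p * (p + r)⁻¹).re ∂ν := (integral_re hI.integrableOn).symm
    _ ≤ ∫ r, (p * (p + r)⁻¹).re ∂ν :=
      setIntegral_le_integral hI.re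
        (hν0.mono fun r hr => Complex.re_mul_inv_add_ofReal_nonneg hp hr)
    _ = _ := integral_re hI

end SpectralIntegral

section SquareRoot

variable {α : Type*} {l : Filter α} {f : α → ℂ}

lemma tendsto_div_cpow_one_half_of_tendsto_ofReal {G : ℝ} (hG : 0 < G)
    (hf : Tendsto f l (𝓝 G)) (c : ℂ) :
    Tendsto (fun x => c / f x ^ (1 / 2 : ℂ)) l (𝓝 (c / √G)) := by
  have hsqrt : ((G : ℂ) ^ (1 / 2 : ℂ)) = (√G : ℂ) := by
    rw [Real.sqrt_eq_rpow, Complex.ofReal_cpow hG.le]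
    push_cast; rfl
  have h := (continuousAt_cpow_const (b := 1 / 2)
    (Complex.ofReal_mem_slitPlane.2 hG)).tendsto.comp hf
  rw [hsqrt] at h
  exact tendsto_const_nhds.div h (by simpa using (Real.sqrt_pos.2 hG).ne')

lemma tendsto_div_cpow_one_half_of_tendsto_cobounded (hf : Tendsto f l (cobounded ℂ))
    (c : ℂ) : Tendsto (fun x => c / f x ^ (1 / 2 : ℂ)) l (𝓝 0) := by
  have h : Tendsto (fun x => f x ^ (1 / 2 : ℂ)) l (cobounded ℂ) := by
    rw [← tendsto_norm_atTop_iff_cobounded]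
    simp_rw [Complex.norm_cpow_one_half]
    exact Real.tendsto_sqrt_atTop.comp (tendsto_norm_atTop_iff_cobounded.2 hf)
  simpa [div_eq_mul_inv] using (tendsto_inv₀_cobounded.comp h).const_mul c

end SquareRoot

lemma exists_pos_forall_le_norm_of_eventually {E : Type*} [SeminormedAddGroup E] {s : Set E}
    {P : E → Prop} (h : ∀ᶠ x in cobounded E ⊓ 𝓟 s, P x) :
    ∃ R > (0 : ℝ), ∀ x ∈ s, R ≤ ‖x‖ → P x := by
  rw [eventually_inf_principal, ← comap_norm_atTop, eventually_comap, eventually_atTop] at h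
  obtain ⟨R, hR⟩ := h
  exact ⟨max R 1, by positivity, fun x hx hRx => hR _ (le_of_max_le_left hRx) x rfl hx⟩

theorem stmt9_general (ρ : ℝ) (μ : Measure ℝ)
    (hμ0 : μ (Ici (0:ℝ)) ≠ 0)
    (hμ : (∫⁻ r in Ici (0:ℝ), ENNReal.ofReal ((1 + r)⁻¹) ∂μ) < ⊤)
    (Q κ : ℂ → ℂ)
    (hQ : ∀ p : ℂ, Q p = p * ∫ r in Ici (0:ℝ), (p + (r : ℂ))⁻¹ ∂μ)
    (hκ : ∀ p : ℂ, κ p = (Real.sqrt ρ : ℂ) * p / (Q p) ^ ((1:ℂ) / 2))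
    (L : ℂ)
    (hL : L = if μ (Ici (0:ℝ)) = ⊤ then 0
      else ((Real.sqrt (ρ / (μ (Ici (0:ℝ))).toReal) : ℝ) : ℂ)) :
    ∀ ε > (0:ℝ), ∃ R₀ > (0:ℝ), ∀ p : ℂ, 0 ≤ p.re → R₀ ≤ ‖p‖ →
      ‖κ p / p - L‖ ≤ ε := by
  intro ε hε
  have hν0 : ∀ᵐ r ∂μ.restrict (Ici 0), 0 ≤ r := ae_restrict_mem measurableSet_Ici
  have hQ' : Q = fun p : ℂ => ∫ r in Ici 0, p * (p + r)⁻¹ ∂μ := by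
    ext p; rw [hQ, integral_const_mul]
  have hκQ : (fun p => √ρ / Q p ^ (1 / 2 : ℂ)) =ᶠ[cobounded ℂ ⊓ 𝓟 {p | 0 ≤ p.re}]
      fun p => κ p / p := by
    filter_upwards [(tendsto_norm_cobounded_atTop.eventually_gt_atTop 0).filter_mono inf_le_left]
      with p hp
    rw [hκ, mul_div_right_comm, mul_div_assoc, div_self (norm_pos_iff.1 hp), mul_one]
  have hlim : Tendsto (fun p => κ p / p) (cobounded ℂ ⊓ 𝓟 {p | 0 ≤ p.re}) (𝓝 L) := by
    refine Tendsto.congr' hκQ ?_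
    by_cases hG : μ (Ici 0) = ⊤
    · rw [hL, if_pos hG]
      refine tendsto_div_cpow_one_half_of_tendsto_cobounded ?_ _
      rw [← tendsto_norm_atTop_iff_cobounded, hQ']
      refine tendsto_atTop_mono (fun p => Complex.re_le_norm _) ?_
      exact tendsto_re_integral_mul_inv_add_ofReal_atTop hν0 hμ (by simpa using hG)
    · have := isFiniteMeasure_restrict.2 hG
      rw [hL, if_neg hG, Real.sqrt_div' _ ENNReal.toReal_nonneg, Complex.ofReal_div]
      refine tendsto_div_cpow_one_half_of_tendsto_ofReal (ENNReal.toReal_pos hμ0 hG) ?_ _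
      simpa [hQ', measureReal_def] using tendsto_integral_mul_inv_add_ofReal hν0
  simpa [dist_eq_norm] using
    exists_pos_forall_le_norm_of_eventually (hlim.eventually (Metric.closedBall_mem_nhds L hε))

/-- For a viscoelastic medium with density `ρ > 0` and nonzero relaxation
spectral measure `μ` on `[0,∞)` with `∫ (1+r)⁻¹ μ(dr) < ∞`, define
`Q(p) = p ∫_{[0,∞)} (p+r)⁻¹ μ(dr)` and `κ(p) = √ρ · p / Q(p)^{1/2}` (principal branch), and
`G₀ = μ([0,∞)) ∈ (0,∞]`.  Then `κ(p)/p → (ρ/G₀)^{1/2}` (with limit `0` when `G₀ = ∞`) as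
`|p| → ∞` in the closed right half-plane, uniformly in `arg p`. -/
theorem stmt9 (ρ : ℝ) (hρ : 0 < ρ) (μ : Measure ℝ)
    (hμ0 : μ (Ici (0:ℝ)) ≠ 0)
    (hμ : (∫⁻ r in Ici (0:ℝ), ENNReal.ofReal ((1 + r)⁻¹) ∂μ) < ⊤)
    (Q κ : ℂ → ℂ)
    (hQ : ∀ p : ℂ, Q p = p * ∫ r in Ici (0:ℝ), (p + (r : ℂ))⁻¹ ∂μ)
    (hκ : ∀ p : ℂ, κ p = (Real.sqrt ρ : ℂ) * p / (Q p) ^ ((1:ℂ) / 2))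
    (L : ℂ)
    (hL : L = if μ (Ici (0:ℝ)) = ⊤ then 0
      else ((Real.sqrt (ρ / (μ (Ici (0:ℝ))).toReal) : ℝ) : ℂ)) :
    ∀ ε > (0:ℝ), ∃ R₀ > (0:ℝ), ∀ p : ℂ, 0 ≤ p.re → R₀ ≤ ‖p‖ →
      ‖κ p / p - L‖ ≤ ε :=
  stmt9_general ρ μ hμ0 hμ Q κ hQ hκ L hL
end

section
/- Let ν be a positive Radon measure on [0,∞) with ∫_{[0,∞)} (1+r)^{−1} ν(dr) < ∞, define A(ω) = ω² ∫_{[0,∞)} (ω²+r²)^{−1} ν(dr) and D(ω) = ω ∫_{[0,∞)} r (ω²+r²)^{−1} ν(dr) for ω > 0. Suppose ν([0,r]) ∼ r^{1−α} l(r) as r → ∞, where 0 < α < 1 and l is slowly varying at infinity. Then A(ω) ∼ [(1−α)π / (2 cos(απ/2))] ω^{1−α} l(ω) and D(ω) ∼ [(1−α)π / (2 sin(απ/2))] ω^{1−α} l(ω) as ω → ∞. -/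
/-!
Write `F r = ν([0, r])`. Both kernels have the form `Q (r / ω)` with `Q x = ∫_x^∞ q`, for
`q u = 2u / (1 + u²)²` (attenuation) and `q u = (u² - 1) / (1 + u²)²` (dispersion). By Fubini,
`∫ Q (r / ω) ν(dr) = ∫_0^∞ q(u) F(ωu) du`. Regular variation gives
`F(ωu) / (ω^{1-α} l(ω)) → u^{1-α}` for each `u`, and iterating the doubling bound
`F(2x) ≤ 2^σ F(x)` (`1 - α < σ < 1`) yields the domination needed for dominated convergence.
The limits `∫_0^∞ q(u) u^{1-α} du` are Beta integrals, evaluated by Euler's reflection formula.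
-/

open MeasureTheory Set Real Filter Topology
open scoped ENNReal

theorem intervalIntegral_rpow_mul_one_sub_rpow {a b : ℝ} (ha : 0 < a) (hb : 0 < b) :
    ∫ x in (0 : ℝ)..1, x ^ (a - 1) * (1 - x) ^ (b - 1) = Gamma a * Gamma b / Gamma (a + b) := by
  have h := Complex.betaIntegral_eq_Gamma_mul_div a b (by simpa) (by simpa)
  apply Complex.ofReal_injective
  rw [← intervalIntegral.integral_ofReal]
  push_cast
  rw [← Complex.Gamma_ofReal, ← Complex.Gamma_ofReal, ← Complex.Gamma_ofReal]
  push_cast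
  rw [← h, Complex.betaIntegral]
  refine intervalIntegral.integral_congr fun x hx => ?_
  rw [uIcc_of_le zero_le_one] at hx
  rw [Complex.ofReal_cpow hx.1, Complex.ofReal_cpow (by linarith [hx.2])]
  push_cast
  rfl

theorem integral_Ioo_zero_one_eq_integral_Ioi (g : ℝ → ℝ) :
    ∫ x in Ioo 0 1, g x = ∫ u in Ioi 0, 2 * u / (1 + u ^ 2) ^ 2 * g (u ^ 2 / (1 + u ^ 2)) := by
  have himage : (fun u : ℝ => u ^ 2 / (1 + u ^ 2)) '' Ioi 0 = Ioo 0 1 := by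
    ext y
    constructor
    · rintro ⟨u, hu, rfl⟩
      have hu : 0 < u := hu
      exact ⟨by positivity, (div_lt_one (by positivity)).mpr (by linarith)⟩
    · rintro ⟨hy0, hy1⟩
      have : 0 < 1 - y := by linarith
      refine ⟨√(y / (1 - y)), sqrt_pos.mpr (by positivity), ?_⟩
      simp only
      rw [sq_sqrt (by positivity)]
      field_simp
      ring
  have hderiv : ∀ u ∈ Ioi (0 : ℝ), HasDerivWithinAt (fun u : ℝ => u ^ 2 / (1 + u ^ 2))
      (2 * u / (1 + u ^ 2) ^ 2) (Ioi 0) u := fun u _ => by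
    have h := (hasDerivAt_pow 2 u).div ((hasDerivAt_pow 2 u).const_add 1) (by positivity)
    refine (h.congr_deriv ?_).hasDerivWithinAt
    push_cast
    ring
  have hinj : InjOn (fun u : ℝ => u ^ 2 / (1 + u ^ 2)) (Ioi 0) := by
    refine StrictMonoOn.injOn fun u (hu : 0 < u) v _ huv => ?_
    rw [div_lt_div_iff₀ (by positivity) (by positivity)]
    nlinarith
  rw [← himage, integral_image_eq_integral_abs_deriv_smul measurableSet_Ioi hderiv hinj]
  refine setIntegral_congr_fun measurableSet_Ioi fun u (hu : 0 < u) => ?_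
  rw [smul_eq_mul, abs_of_pos (by positivity)]

theorem integral_Ioi_rpow_mul_one_add_sq_rpow {a b : ℝ} (ha : 0 < a) (hb : 0 < b) :
    ∫ u in Ioi 0, u ^ (2 * a - 1) * (1 + u ^ 2) ^ (-(a + b)) =
      Gamma a * Gamma b / Gamma (a + b) / 2 := by
  rw [← intervalIntegral_rpow_mul_one_sub_rpow ha hb, intervalIntegral.integral_of_le zero_le_one,
    integral_Ioc_eq_integral_Ioo, integral_Ioo_zero_one_eq_integral_Ioi, ← integral_div]
  refine setIntegral_congr_fun measurableSet_Ioi fun u (hu : 0 < u) => ?_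
  have hv : 0 < 1 + u ^ 2 := by positivity
  have hsub : 1 - u ^ 2 / (1 + u ^ 2) = (1 + u ^ 2)⁻¹ := by field_simp; ring
  have hu' : u ^ (2 * a - 1) = u * (u ^ 2) ^ (a - 1) := by
    rw [← rpow_natCast, ← rpow_mul hu.le, show 2 * a - 1 = 1 + ((2 : ℕ) : ℝ) * (a - 1) by
      push_cast; ring, rpow_add hu, rpow_one]
  have hv' : (1 + u ^ 2) ^ (-(a + b)) =
      ((1 + u ^ 2) ^ 2 * (1 + u ^ 2) ^ (a - 1) * (1 + u ^ 2) ^ (b - 1))⁻¹ := by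
    rw [rpow_neg hv.le, ← rpow_natCast (1 + u ^ 2) 2, ← rpow_add hv, ← rpow_add hv]
    push_cast; ring_nf
  rw [hsub, hu', hv', div_rpow (by positivity) hv.le, inv_rpow hv.le]
  field_simp

theorem integrableOn_Ioi_rpow_mul_one_add_sq_rpow {p m : ℝ} (hp : -1 < p) (hm : p + 1 < 2 * m) :
    IntegrableOn (fun u : ℝ => u ^ p * (1 + u ^ 2) ^ (-m)) (Ioi 0) := by
  have hm0 : 0 < m := by linarith
  have hmeas : AEStronglyMeasurable (fun u : ℝ => u ^ p * (1 + u ^ 2) ^ (-m))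
      (volume.restrict (Ioi 0)) :=
    (((continuousOn_id.rpow_const fun x hx => Or.inl (ne_of_gt hx)).mul
      ((continuous_const.add (continuous_pow 2)).rpow_const fun x =>
        Or.inl (by positivity : (0 : ℝ) < 1 + x ^ 2).ne').continuousOn).aestronglyMeasurable
      measurableSet_Ioi)
  rw [← Ioc_union_Ioi_eq_Ioi zero_le_one]
  refine IntegrableOn.union ?_ ?_
  · have hint : IntegrableOn (fun u : ℝ => u ^ p) (Ioc 0 1) := by
      simpa [intervalIntegrable_iff_integrableOn_Ioc_of_le zero_le_one] using
        intervalIntegral.intervalIntegrable_rpow' (a := 0) (b := 1) hp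
    refine hint.mono' (hmeas.mono_set Ioc_subset_Ioi_self) ?_
    filter_upwards [ae_restrict_mem measurableSet_Ioc] with u hu
    have hu0 : 0 < u := hu.1
    rw [norm_of_nonneg (by positivity)]
    refine mul_le_of_le_one_right (rpow_nonneg hu0.le p) ?_
    exact rpow_le_one_of_one_le_of_nonpos (by nlinarith) (by linarith)
  · have hint : IntegrableOn (fun u : ℝ => u ^ (p - 2 * m)) (Ioi 1) :=
      integrableOn_Ioi_rpow_of_lt (by linarith) one_pos
    refine hint.mono' (hmeas.mono_set (Ioi_subset_Ioi zero_le_one)) ?_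
    filter_upwards [ae_restrict_mem measurableSet_Ioi] with u (hu : 1 < u)
    have hu0 : 0 < u := one_pos.trans hu
    rw [norm_of_nonneg (by positivity), sub_eq_add_neg, rpow_add hu0, rpow_neg hu0.le,
      rpow_neg (by positivity), rpow_mul hu0.le, rpow_two]
    gcongr
    linarith

theorem integral_Ioi_two_mul_div_one_add_sq_sq_mul_rpow {α : ℝ} (hα0 : -1 < α) (hα1 : α < 1) :
    ∫ u in Ioi 0, 2 * u / (1 + u ^ 2) ^ 2 * u ^ (1 - α) = (1 - α) * π / (2 * cos (α * π / 2)) := by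
  have key := integral_Ioi_rpow_mul_one_add_sq_rpow (a := (3 - α) / 2) (b := (1 + α) / 2)
    (by linarith) (by linarith)
  rw [show 2 * ((3 - α) / 2) - 1 = 2 - α by ring, show (3 - α) / 2 + (1 + α) / 2 = 2 by ring,
    Gamma_two, div_one, show (3 - α) / 2 = (1 - α) / 2 + 1 by ring,
    Gamma_add_one (by linarith), show (1 + α) / 2 = 1 - (1 - α) / 2 by ring, mul_assoc,
    Gamma_mul_Gamma_one_sub, show π * ((1 - α) / 2) = π / 2 - α * π / 2 by ring,
    sin_pi_div_two_sub] at key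
  have hcos : 0 < cos (α * π / 2) :=
    cos_pos_of_mem_Ioo ⟨by nlinarith [pi_pos], by nlinarith [pi_pos]⟩
  have hpt : ∀ u ∈ Ioi (0 : ℝ), 2 * u / (1 + u ^ 2) ^ 2 * u ^ (1 - α) =
      2 * (u ^ (2 - α) * (1 + u ^ 2) ^ (-2 : ℝ)) := fun u (hu : 0 < u) => by
    rw [rpow_neg (by positivity), rpow_two, show 2 - α = 1 + (1 - α) by ring, rpow_add hu, rpow_one]
    ring
  rw [setIntegral_congr_fun measurableSet_Ioi hpt, integral_const_mul, key]
  field_simp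

theorem integral_Ioi_sq_sub_one_div_one_add_sq_sq_mul_rpow {α : ℝ} (hα0 : 0 < α) (hα1 : α < 2) :
    ∫ u in Ioi 0, (u ^ 2 - 1) / (1 + u ^ 2) ^ 2 * u ^ (1 - α) =
      (1 - α) * π / (2 * sin (α * π / 2)) := by
  have key1 := integral_Ioi_rpow_mul_one_add_sq_rpow (a := (2 - α) / 2) (b := α / 2)
    (by linarith) (by linarith)
  have key2 := integral_Ioi_rpow_mul_one_add_sq_rpow (a := (2 - α) / 2) (b := (2 + α) / 2)
    (by linarith) (by linarith)
  rw [show 2 * ((2 - α) / 2) - 1 = 1 - α by ring, show (2 - α) / 2 + α / 2 = 1 by ring,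
    Gamma_one, div_one, show (2 - α) / 2 = 1 - α / 2 by ring, mul_comm,
    Gamma_mul_Gamma_one_sub, show π * (α / 2) = α * π / 2 by ring] at key1
  rw [show 2 * ((2 - α) / 2) - 1 = 1 - α by ring, show (2 - α) / 2 + (2 + α) / 2 = 2 by ring,
    Gamma_two, div_one, show (2 - α) / 2 = 1 - α / 2 by ring, show (2 + α) / 2 = α / 2 + 1 by ring,
    Gamma_add_one (by linarith), mul_left_comm, mul_comm (Gamma _), Gamma_mul_Gamma_one_sub,
    show π * (α / 2) = α * π / 2 by ring] at key2
  have hsin : 0 < sin (α * π / 2) :=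
    sin_pos_of_pos_of_lt_pi (by positivity) (by nlinarith [pi_pos])
  have hpt : ∀ u ∈ Ioi (0 : ℝ), (u ^ 2 - 1) / (1 + u ^ 2) ^ 2 * u ^ (1 - α) =
      u ^ (1 - α) * (1 + u ^ 2) ^ (-1 : ℝ) - 2 * (u ^ (1 - α) * (1 + u ^ 2) ^ (-2 : ℝ)) :=
    fun u (hu : 0 < u) => by
      rw [rpow_neg (by positivity), rpow_neg (by positivity), rpow_two, rpow_one]
      field_simp
      ring
  rw [setIntegral_congr_fun measurableSet_Ioi hpt,
    integral_sub (integrableOn_Ioi_rpow_mul_one_add_sq_rpow (by linarith) (by linarith))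
      ((integrableOn_Ioi_rpow_mul_one_add_sq_rpow (by linarith) (by linarith)).const_mul 2),
    integral_const_mul, key1, key2]
  field_simp

theorem abs_two_mul_div_one_add_sq_sq_le (u : ℝ) : |2 * u / (1 + u ^ 2) ^ 2| ≤ (1 + u ^ 2)⁻¹ := by
  rw [abs_div, abs_of_pos (by positivity : (0 : ℝ) < (1 + u ^ 2) ^ 2), div_le_iff₀ (by positivity),
    show (1 + u ^ 2)⁻¹ * (1 + u ^ 2) ^ 2 = 1 + u ^ 2 by field_simp, abs_le]
  constructor <;> nlinarith [sq_nonneg (u + 1), sq_nonneg (u - 1)]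

theorem abs_sq_sub_one_div_one_add_sq_sq_le (u : ℝ) :
    |(u ^ 2 - 1) / (1 + u ^ 2) ^ 2| ≤ (1 + u ^ 2)⁻¹ := by
  rw [abs_div, abs_of_pos (by positivity : (0 : ℝ) < (1 + u ^ 2) ^ 2), div_le_iff₀ (by positivity),
    show (1 + u ^ 2)⁻¹ * (1 + u ^ 2) ^ 2 = 1 + u ^ 2 by field_simp, abs_le]
  constructor <;> nlinarith [sq_nonneg u]

theorem integrable_of_abs_le_inv_one_add_sq {q : ℝ → ℝ} (hq : Continuous q)
    (hqb : ∀ u, |q u| ≤ (1 + u ^ 2)⁻¹) : Integrable q :=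
  integrable_inv_one_add_sq.mono' hq.aestronglyMeasurable (ae_of_all _ hqb)

theorem integral_Ioi_two_mul_div_one_add_sq_sq (x : ℝ) :
    ∫ s in Ioi x, 2 * s / (1 + s ^ 2) ^ 2 = (1 + x ^ 2)⁻¹ := by
  have hderiv : ∀ s ∈ Ici x, HasDerivAt (fun s : ℝ => -(1 + s ^ 2)⁻¹) (2 * s / (1 + s ^ 2) ^ 2) s :=
    fun s _ => by
      refine (((hasDerivAt_pow 2 s).const_add 1).inv (by positivity)).neg.congr_deriv ?_
      push_cast; ring
  have hlim : Tendsto (fun s : ℝ => -(1 + s ^ 2)⁻¹) atTop (𝓝 0) := by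
    simpa using (tendsto_inv_atTop_zero.comp
      (tendsto_atTop_add_const_left atTop (1 : ℝ) (tendsto_pow_atTop two_ne_zero))).neg
  rw [integral_Ioi_of_hasDerivAt_of_tendsto' hderiv (integrable_of_abs_le_inv_one_add_sq
    (by fun_prop (disch := intro; positivity)) abs_two_mul_div_one_add_sq_sq_le).integrableOn hlim]
  ring

theorem integral_Ioi_sq_sub_one_div_one_add_sq_sq (x : ℝ) :
    ∫ s in Ioi x, (s ^ 2 - 1) / (1 + s ^ 2) ^ 2 = x / (1 + x ^ 2) := by
  have hderiv : ∀ s ∈ Ici x, HasDerivAt (fun s : ℝ => -(s / (1 + s ^ 2)))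
      ((s ^ 2 - 1) / (1 + s ^ 2) ^ 2) s := fun s _ => by
    refine ((hasDerivAt_id s).div ((hasDerivAt_pow 2 s).const_add 1)
      (by positivity)).neg.congr_deriv ?_
    simp only [id]
    field_simp
    ring
  have hlim : Tendsto (fun s : ℝ => -(s / (1 + s ^ 2))) atTop (𝓝 0) := by
    rw [← neg_zero]
    refine (squeeze_zero' ?_ ?_ tendsto_inv_atTop_zero).neg
    · filter_upwards [eventually_ge_atTop 0] with s hs
      positivity
    · filter_upwards [eventually_gt_atTop 0] with s hs
      rw [div_le_iff₀ (by positivity), inv_mul_eq_div, le_div_iff₀ hs]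
      nlinarith
  rw [integral_Ioi_of_hasDerivAt_of_tendsto' hderiv (integrable_of_abs_le_inv_one_add_sq
    (by fun_prop (disch := intro; positivity)) abs_sq_sub_one_div_one_add_sq_sq_le).integrableOn
    hlim]
  ring

theorem lintegral_Ici_inv_one_add_sq_le {r : ℝ} (hr : 0 ≤ r) :
    ∫⁻ s in Ici r, ENNReal.ofReal (1 + s ^ 2)⁻¹ ≤ ENNReal.ofReal (2 * (1 + r)⁻¹) := by
  have hderiv : ∀ s ∈ Ici r, HasDerivAt (fun s => -(2 * (1 + s)⁻¹)) (2 * ((1 + s) ^ 2)⁻¹) s := by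
    intro s hs
    have hs : 1 + s ≠ 0 := by linarith [mem_Ici.mp hs]
    refine ((((hasDerivAt_id s).const_add 1).inv hs).const_mul 2).neg.congr_deriv ?_
    simp [div_eq_mul_inv]
  have hpos : ∀ s ∈ Ioi r, 0 ≤ 2 * ((1 + s) ^ 2)⁻¹ := fun s _ => by positivity
  have hlim : Tendsto (fun s : ℝ => -(2 * (1 + s)⁻¹)) atTop (𝓝 0) := by
    simpa using ((tendsto_inv_atTop_zero.comp
      (tendsto_atTop_add_const_left atTop (1 : ℝ) tendsto_id)).const_mul 2).neg
  calc ∫⁻ s in Ici r, ENNReal.ofReal (1 + s ^ 2)⁻¹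
      ≤ ∫⁻ s in Ioi r, ENNReal.ofReal (2 * ((1 + s) ^ 2)⁻¹) := by
        rw [← restrict_Ioi_eq_restrict_Ici]
        refine setLIntegral_mono' measurableSet_Ioi fun s hs => ENNReal.ofReal_le_ofReal ?_
        have hs : 0 < s := hr.trans_lt hs
        rw [← div_eq_mul_inv, le_div_iff₀ (by positivity), ← div_eq_inv_mul,
          div_le_iff₀ (by positivity)]
        nlinarith [sq_nonneg (s - 1)]
    _ = ENNReal.ofReal (∫ s in Ioi r, 2 * ((1 + s) ^ 2)⁻¹) :=
        (ofReal_integral_eq_lintegral_ofReal (integrableOn_Ioi_deriv_of_nonneg' hderiv hpos hlim)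
          (ae_restrict_of_forall_mem measurableSet_Ioi hpos)).symm
    _ = ENNReal.ofReal (2 * (1 + r)⁻¹) := by
        rw [integral_Ioi_of_hasDerivAt_of_nonneg' hderiv hpos hlim, zero_sub, neg_neg]

section Fubini

variable (μ ν : Measure ℝ) [SFinite μ] [SFinite ν]

theorem measurable_uncurry_indicator_Ici {β : Type*} [MeasurableSpace β] [Zero β]
    {k : ℝ → β} (hk : Measurable k) :
    Measurable (Function.uncurry fun r s => (Ici r).indicator k s) := by
  have : (Function.uncurry fun r s => (Ici r).indicator k s)
      = {p : ℝ × ℝ | p.1 ≤ p.2}.indicator (k ∘ Prod.snd) := by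
    ext ⟨r, s⟩; simp [indicator_apply]
  rw [this]
  exact (hk.comp measurable_snd).indicator (measurableSet_le measurable_fst measurable_snd)

theorem lintegral_lintegral_Ici_swap {k : ℝ → ℝ≥0∞} (hk : Measurable k) :
    ∫⁻ r, ∫⁻ s in Ici r, k s ∂ν ∂μ = ∫⁻ s, μ (Iic s) * k s ∂ν := by
  have hmeas := measurable_uncurry_indicator_Ici hk
  simp_rw [← lintegral_indicator measurableSet_Ici]
  rw [lintegral_lintegral_swap hmeas.aemeasurable]
  congr 1 with s
  have : ∀ r, (Ici r).indicator k s = (Iic s).indicator (fun _ => k s) r := by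
    intro r; simp [indicator_apply]
  simp_rw [this, lintegral_indicator measurableSet_Iic, setLIntegral_const, mul_comm]

theorem integral_integral_Ici_swap {k : ℝ → ℝ} (hk : Measurable k)
    (hfin : ∫⁻ s, μ (Iic s) * ‖k s‖ₑ ∂ν ≠ ∞) :
    ∫ r, ∫ s in Ici r, k s ∂ν ∂μ = ∫ s, μ.real (Iic s) * k s ∂ν := by
  have hmeas := measurable_uncurry_indicator_Ici hk
  have hint : Integrable (Function.uncurry fun r s => (Ici r).indicator k s) (μ.prod ν) := by
    refine ⟨hmeas.aestronglyMeasurable, ?_⟩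
    rw [hasFiniteIntegral_iff_enorm, lintegral_prod _ hmeas.enorm.aemeasurable]
    simp_rw [Function.uncurry_apply_pair, enorm_indicator_eq_indicator_enorm,
      lintegral_indicator measurableSet_Ici]
    rw [lintegral_lintegral_Ici_swap μ ν hk.enorm]
    exact hfin.lt_top
  simp_rw [← integral_indicator measurableSet_Ici]
  rw [integral_integral_swap hint]
  congr 1 with s
  have : ∀ r, (Ici r).indicator k s = (Iic s).indicator (fun _ => k s) r := by
    intro r; simp [indicator_apply]
  simp_rw [this, integral_indicator measurableSet_Iic, setIntegral_const, smul_eq_mul]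

end Fubini

section RadonMeasure

variable {ν : Measure ℝ}

theorem measure_Icc_zero_lt_top (hν : ∫⁻ r in Ici 0, ENNReal.ofReal (1 + r)⁻¹ ∂ν < ∞) (s : ℝ) :
    ν (Icc 0 s) < ∞ := by
  calc ν (Icc 0 s) = ∫⁻ r in Icc 0 s, 1 ∂ν := (setLIntegral_one _).symm
    _ ≤ ∫⁻ r in Icc 0 s, ENNReal.ofReal (1 + |s|) * ENNReal.ofReal (1 + r)⁻¹ ∂ν := by
        refine setLIntegral_mono' measurableSet_Icc fun r ⟨hr0, hrs⟩ => ?_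
        rw [← ENNReal.ofReal_mul (by positivity), ← ENNReal.ofReal_one]
        refine ENNReal.ofReal_le_ofReal ?_
        rw [← div_eq_mul_inv, le_div_iff₀ (by linarith)]
        linarith [le_abs_self s]
    _ ≤ ∫⁻ r in Ici 0, ENNReal.ofReal (1 + |s|) * ENNReal.ofReal (1 + r)⁻¹ ∂ν :=
        lintegral_mono_set Icc_subset_Ici_self
    _ < ∞ := by
        rw [lintegral_const_mul' _ _ ENNReal.ofReal_ne_top]
        exact ENNReal.mul_lt_top ENNReal.ofReal_lt_top hν

theorem isLocallyFiniteMeasure_restrict_Ici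
    (hν : ∫⁻ r in Ici 0, ENNReal.ofReal (1 + r)⁻¹ ∂ν < ∞) :
    IsLocallyFiniteMeasure (ν.restrict (Ici 0)) := by
  refine ⟨fun x => ⟨Iic (x + 1), Iic_mem_nhds (by linarith), ?_⟩⟩
  rw [Measure.restrict_apply measurableSet_Iic, Iic_inter_Ici]
  exact measure_Icc_zero_lt_top hν _

theorem setIntegral_Ici_integral_Ioi_eq
    (hν : ∫⁻ r in Ici 0, ENNReal.ofReal (1 + r)⁻¹ ∂ν < ∞) {k : ℝ → ℝ} (hk : Measurable k) {C : ℝ}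
    (hkC : ∀ s, |k s| ≤ C * (1 + s ^ 2)⁻¹) :
    ∫ r in Ici 0, (∫ s in Ioi r, k s) ∂ν = ∫ s in Ioi 0, k s * ν.real (Icc 0 s) := by
  set μ := ν.restrict (Ici 0)
  have := isLocallyFiniteMeasure_restrict_Ici hν
  have htail : ∀ᵐ r ∂μ,
      ∫⁻ s in Ici r, ‖k s‖ₑ ≤ ENNReal.ofReal C * ENNReal.ofReal (2 * (1 + r)⁻¹) := by
    filter_upwards [ae_restrict_mem measurableSet_Ici] with r hr
    calc ∫⁻ s in Ici r, ‖k s‖ₑ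
        ≤ ∫⁻ s in Ici r, ENNReal.ofReal C * ENNReal.ofReal (1 + s ^ 2)⁻¹ := by
          refine lintegral_mono fun s => ?_
          rw [← ENNReal.ofReal_mul' (by positivity), ← Real.enorm_abs,
            Real.enorm_eq_ofReal (abs_nonneg _)]
          exact ENNReal.ofReal_le_ofReal (hkC s)
      _ ≤ ENNReal.ofReal C * ENNReal.ofReal (2 * (1 + r)⁻¹) := by
          rw [lintegral_const_mul' _ _ ENNReal.ofReal_ne_top]
          gcongr
          exact lintegral_Ici_inv_one_add_sq_le hr
  have hfin : ∫⁻ s, μ (Iic s) * ‖k s‖ₑ ≠ ∞ := by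
    rw [← lintegral_lintegral_Ici_swap μ volume hk.enorm]
    refine ((lintegral_mono_ae htail).trans_lt ?_).ne
    simp_rw [ENNReal.ofReal_mul zero_le_two]
    rw [lintegral_const_mul' _ _ ENNReal.ofReal_ne_top,
      lintegral_const_mul' _ _ ENNReal.ofReal_ne_top]
    exact ENNReal.mul_lt_top ENNReal.ofReal_lt_top (ENNReal.mul_lt_top ENNReal.ofReal_lt_top hν)
  have hreal : ∀ s, μ.real (Iic s) = ν.real (Icc 0 s) := fun s => by
    rw [measureReal_restrict_apply measurableSet_Iic, Iic_inter_Ici]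
  calc ∫ r in Ici 0, (∫ s in Ioi r, k s) ∂ν = ∫ r, (∫ s in Ici r, k s) ∂μ := by
        simp_rw [integral_Ici_eq_integral_Ioi]
        rfl
    _ = ∫ s, μ.real (Iic s) * k s := integral_integral_Ici_swap μ volume hk hfin
    _ = ∫ s in Ici 0, k s * ν.real (Icc 0 s) := by
        rw [setIntegral_eq_integral_of_forall_compl_eq_zero fun s hs => ?_]
        · simp_rw [hreal, mul_comm]
        · rw [Icc_eq_empty (by simpa using hs), measureReal_empty, mul_zero]
    _ = ∫ s in Ioi 0, k s * ν.real (Icc 0 s) := integral_Ici_eq_integral_Ioi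

theorem setIntegral_Ici_comp_div_eq
    (hν : ∫⁻ r in Ici 0, ENNReal.ofReal (1 + r)⁻¹ ∂ν < ∞) {q Q : ℝ → ℝ} (hq : Measurable q)
    (hqb : ∀ u, |q u| ≤ (1 + u ^ 2)⁻¹) (hQ : ∀ x, ∫ s in Ioi x, q s = Q x) {ω : ℝ} (hω : 0 < ω) :
    ∫ r in Ici 0, Q (r / ω) ∂ν = ∫ u in Ioi 0, q u * ν.real (Icc 0 (ω * u)) := by
  have hω' : 0 < ω⁻¹ := inv_pos.mpr hω
  have htail : ∀ r, ∫ s in Ioi r, ω⁻¹ * q (ω⁻¹ * s) = Q (r / ω) := fun r => by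
    rw [integral_const_mul, integral_comp_mul_left_Ioi q r hω', hQ, smul_eq_mul, inv_inv,
      inv_mul_cancel_left₀ hω.ne', inv_mul_eq_div]
  have hbound : ∀ s, |ω⁻¹ * q (ω⁻¹ * s)| ≤ (ω + ω⁻¹) * (1 + s ^ 2)⁻¹ := fun s => by
    rw [abs_mul, abs_of_pos hω']
    refine (mul_le_mul_of_nonneg_left (hqb _) hω'.le).trans ?_
    rw [← div_eq_mul_inv, ← div_eq_mul_inv, div_le_div_iff₀ (by positivity) (by positivity)]
    field_simp
    nlinarith [sq_nonneg s, sq_nonneg ω, mul_pos hω hω]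
  simp_rw [← htail]
  have hk : Measurable fun s => ω⁻¹ * q (ω⁻¹ * s) :=
    (hq.comp (measurable_const_mul _)).const_mul _
  rw [setIntegral_Ici_integral_Ioi_eq hν hk hbound, ← mul_zero ω,
    ← integral_comp_mul_left_Ioi' _ 0 hω, mul_zero, smul_eq_mul, ← integral_const_mul]
  refine setIntegral_congr_fun measurableSet_Ioi fun u _ => ?_
  rw [inv_mul_cancel_left₀ hω.ne', mul_assoc, mul_inv_cancel_left₀ hω.ne']

end RadonMeasure

theorem tendsto_comp_mul_div_rpow_mul {F l : ℝ → ℝ} {ρ : ℝ} (hlpos : ∀ x, 0 < x → 0 < l x)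
    (hslow : ∀ c, 0 < c → Tendsto (fun x => l (c * x) / l x) atTop (𝓝 1))
    (hasymp : Tendsto (fun x => F x / (x ^ ρ * l x)) atTop (𝓝 1)) {c : ℝ} (hc : 0 < c) :
    Tendsto (fun x => F (c * x) / (x ^ ρ * l x)) atTop (𝓝 (c ^ ρ)) := by
  have h := (hasymp.comp (tendsto_id.const_mul_atTop hc)).mul ((hslow c hc).const_mul (c ^ ρ))
  rw [one_mul, mul_one] at h
  refine h.congr' ?_
  filter_upwards [eventually_gt_atTop 0] with x hx
  have := hlpos x hx
  have := hlpos (c * x) (mul_pos hc hx)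
  simp only [Function.comp, id, mul_rpow hc.le hx.le]
  field_simp

theorem le_rpow_mul_of_doubling {F : ℝ → ℝ} (hF : Monotone F) (hF0 : ∀ x, 0 ≤ F x) {σ X : ℝ}
    (hσ : 0 ≤ σ) (hdouble : ∀ x, X ≤ x → F (2 * x) ≤ 2 ^ σ * F x) {x u : ℝ}
    (hx : X ≤ x) (hx0 : 0 ≤ x) (hu : 1 ≤ u) : F (x * u) ≤ 2 ^ σ * u ^ σ * F x := by
  have hpow : ∀ n : ℕ, F (2 ^ n * x) ≤ (2 ^ σ) ^ n * F x := by
    intro n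
    induction n with
    | zero => simp
    | succ n ih =>
      have hxn : X ≤ 2 ^ n * x := hx.trans (le_mul_of_one_le_left hx0
        (one_le_pow₀ one_le_two))
      calc F (2 ^ (n + 1) * x) = F (2 * (2 ^ n * x)) := by ring_nf
        _ ≤ 2 ^ σ * F (2 ^ n * x) := hdouble _ hxn
        _ ≤ 2 ^ σ * ((2 ^ σ) ^ n * F x) := by gcongr
        _ = (2 ^ σ) ^ (n + 1) * F x := by ring
  obtain ⟨n, h2n, hu2n⟩ := exists_nat_pow_near hu one_lt_two
  calc F (x * u) ≤ F (2 ^ (n + 1) * x) :=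
        hF (by rw [mul_comm]; exact mul_le_mul_of_nonneg_right hu2n.le hx0)
    _ ≤ (2 ^ σ) ^ (n + 1) * F x := hpow (n + 1)
    _ = 2 ^ σ * ((2 : ℝ) ^ n) ^ σ * F x := by
        rw [← rpow_natCast, ← rpow_mul zero_le_two, ← rpow_natCast (2 : ℝ) n,
          ← rpow_mul zero_le_two, ← rpow_add two_pos]
        push_cast; ring_nf
    _ ≤ 2 ^ σ * u ^ σ * F x := by gcongr; exact hF0 x

theorem eventually_comp_mul_le {F G : ℝ → ℝ} {ρ σ : ℝ} (hF : Monotone F) (hF0 : ∀ x, 0 ≤ F x)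
    (hG : ∀ᶠ x in atTop, 0 < G x) (hρσ : ρ < σ) (hσ : 0 ≤ σ)
    (hFG : ∀ c, 0 < c → Tendsto (fun x => F (c * x) / G x) atTop (𝓝 (c ^ ρ))) :
    ∀ᶠ ω in atTop, ∀ u, 0 < u → F (ω * u) ≤ 2 * 2 ^ σ * (1 + u ^ σ) * G ω := by
  have h1 : Tendsto (fun x => F x / G x) atTop (𝓝 1) := by
    simpa using hFG 1 one_pos
  have hdouble : ∀ᶠ x in atTop, F (2 * x) ≤ 2 ^ σ * F x := by
    have hlt : (2 : ℝ) ^ ρ < 2 ^ σ * 1 := by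
      rw [mul_one]; exact rpow_lt_rpow_of_exponent_lt one_lt_two hρσ
    filter_upwards [(hFG 2 two_pos).eventually_lt (h1.const_mul _) hlt, hG] with x hx hGx
    rw [← mul_div_assoc, div_lt_div_iff_of_pos_right hGx] at hx
    exact hx.le
  have hupper : ∀ᶠ x in atTop, F x ≤ 2 * G x := by
    filter_upwards [h1.eventually_lt_const one_lt_two, hG] with x hx hGx
    rw [div_lt_iff₀ hGx] at hx
    exact hx.le
  obtain ⟨X, hX⟩ := eventually_atTop.mp ((hdouble.and hupper).and (hG.and (eventually_gt_atTop 0)))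
  filter_upwards [eventually_ge_atTop X] with ω hω u hu
  obtain ⟨⟨-, hFω⟩, hGω, hω0⟩ := hX ω hω
  have h2σ : 1 ≤ (2 : ℝ) ^ σ := one_le_rpow one_le_two hσ
  have huσ : 0 ≤ u ^ σ := rpow_nonneg hu.le σ
  rcases le_total u 1 with hu1 | hu1
  · calc F (ω * u) ≤ F ω := hF (mul_le_of_le_one_right hω0.le hu1)
      _ ≤ 2 * G ω := hFω
      _ ≤ 2 * 2 ^ σ * (1 + u ^ σ) * G ω := by
          gcongr
          nlinarith
  · calc F (ω * u) ≤ 2 ^ σ * u ^ σ * F ω :=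
          le_rpow_mul_of_doubling hF hF0 hσ (fun x hx => (hX x hx).1.1) hω hω0.le hu1
      _ ≤ 2 ^ σ * u ^ σ * (2 * G ω) := by gcongr
      _ ≤ 2 * 2 ^ σ * (1 + u ^ σ) * G ω := by nlinarith [hGω.le]

theorem tendsto_integral_mul_comp_mul_div {F G q : ℝ → ℝ} {ρ : ℝ} (hρ0 : 0 ≤ ρ) (hρ1 : ρ < 1)
    (hF : Monotone F) (hF0 : ∀ x, 0 ≤ F x) (hG : ∀ᶠ x in atTop, 0 < G x)
    (hFG : ∀ c, 0 < c → Tendsto (fun x => F (c * x) / G x) atTop (𝓝 (c ^ ρ)))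
    (hq : Measurable q) (hqb : ∀ u, |q u| ≤ (1 + u ^ 2)⁻¹) :
    Tendsto (fun ω => (∫ u in Ioi 0, q u * F (ω * u)) / G ω) atTop
      (𝓝 (∫ u in Ioi 0, q u * u ^ ρ)) := by
  obtain ⟨σ, hρσ, hσ1⟩ := exists_between hρ1
  have hbound := eventually_comp_mul_le hF hF0 hG hρσ (hρ0.trans hρσ.le) hFG
  simp_rw [← integral_div, mul_div_assoc]
  refine tendsto_integral_filter_of_dominated_convergence
    (fun u => 2 * 2 ^ σ * ((1 + u ^ 2)⁻¹ + u ^ σ * (1 + u ^ 2) ^ (-1 : ℝ))) ?_ ?_ ?_ ?_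
  · exact Eventually.of_forall fun ω => (hq.mul ((hF.measurable.comp
      (measurable_const_mul ω)).div_const _)).aestronglyMeasurable
  · filter_upwards [hbound, hG] with ω hω hGω
    filter_upwards [ae_restrict_mem measurableSet_Ioi] with u (hu : 0 < u)
    rw [norm_mul, Real.norm_eq_abs, norm_of_nonneg (div_nonneg (hF0 _) hGω.le), rpow_neg_one]
    calc |q u| * (F (ω * u) / G ω) ≤ (1 + u ^ 2)⁻¹ * (2 * 2 ^ σ * (1 + u ^ σ)) := by
          gcongr ?_ * ?_
          · exact div_nonneg (hF0 _) hGω.le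
          · exact hqb u
          · rw [div_le_iff₀ hGω]; exact hω u hu
      _ = 2 * 2 ^ σ * ((1 + u ^ 2)⁻¹ + u ^ σ * (1 + u ^ 2)⁻¹) := by ring
  · exact ((integrable_inv_one_add_sq.integrableOn.add
      (integrableOn_Ioi_rpow_mul_one_add_sq_rpow (by linarith) (by linarith))).const_mul _)
  · filter_upwards [ae_restrict_mem measurableSet_Ioi] with u (hu : 0 < u)
    simpa only [mul_comm u] using (hFG u hu).const_mul (q u)

theorem tendsto_setIntegral_Ici_comp_div_div_rpow_mul {ν : Measure ℝ}
    (hν : ∫⁻ r in Ici 0, ENNReal.ofReal (1 + r)⁻¹ ∂ν < ∞) {α : ℝ} (hα0 : 0 < α) (hα1 : α < 1)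
    {l : ℝ → ℝ} (hlpos : ∀ x, 0 < x → 0 < l x)
    (hslow : ∀ c, 0 < c → Tendsto (fun x => l (c * x) / l x) atTop (𝓝 1))
    (hasymp : Tendsto (fun r => ν.real (Icc 0 r) / (r ^ (1 - α) * l r)) atTop (𝓝 1))
    {q Q : ℝ → ℝ} (hq : Measurable q) (hqb : ∀ u, |q u| ≤ (1 + u ^ 2)⁻¹)
    (hQ : ∀ x, ∫ s in Ioi x, q s = Q x) :
    Tendsto (fun ω => (∫ r in Ici 0, Q (r / ω) ∂ν) / (ω ^ (1 - α) * l ω)) atTop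
      (𝓝 (∫ u in Ioi 0, q u * u ^ (1 - α))) := by
  have hF : Monotone fun s => ν.real (Icc 0 s) := fun a b hab =>
    measureReal_mono (Icc_subset_Icc_right hab) (measure_Icc_zero_lt_top hν b).ne
  have hG : ∀ᶠ x in atTop, 0 < x ^ (1 - α) * l x := by
    filter_upwards [eventually_gt_atTop 0] with x hx
    exact mul_pos (rpow_pos_of_pos hx _) (hlpos x hx)
  refine (tendsto_integral_mul_comp_mul_div (by linarith) (by linarith) hF
    (fun _ => measureReal_nonneg) hG
    (fun c hc => tendsto_comp_mul_div_rpow_mul hlpos hslow hasymp hc) hq hqb).congr' ?_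
  filter_upwards [eventually_gt_atTop 0] with ω hω
  rw [setIntegral_Ici_comp_div_eq hν hq hqb hQ hω]

theorem tendsto_div_const_mul_mul {f a b : ℝ → ℝ} {c : ℝ} (hc : c ≠ 0)
    (h : Tendsto (fun x => f x / (a x * b x)) atTop (𝓝 c)) :
    Tendsto (fun x => f x / (c * a x * b x)) atTop (𝓝 1) := by
  have h' := h.div_const c
  rw [div_self hc] at h'
  refine h'.congr fun x => ?_
  rw [div_div, mul_comm, mul_assoc]

/-- Let `ν` be a positive Radon measure on `[0,∞)` with
`∫ (1+r)⁻¹ ν(dr) < ∞`, and define the attenuation `A(ω) = ω² ∫ (ω²+r²)⁻¹ ν(dr)` and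
dispersion `D(ω) = ω ∫ r(ω²+r²)⁻¹ ν(dr)`.  If `ν([0,r]) ∼ r^{1−α} l(r)` as `r → ∞` with
`0 < α < 1` and `l` slowly varying at infinity, then
`A(ω) ∼ [(1−α)π/(2 cos(απ/2))] ω^{1−α} l(ω)` and
`D(ω) ∼ [(1−α)π/(2 sin(απ/2))] ω^{1−α} l(ω)` as `ω → ∞`. -/
theorem stmt14 (ν : Measure ℝ)
    (hν : (∫⁻ r in Ici (0:ℝ), ENNReal.ofReal ((1 + r)⁻¹) ∂ν) < ⊤)
    (A D : ℝ → ℝ)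
    (hA : ∀ ω : ℝ, 0 < ω → A ω = ω ^ 2 * ∫ r in Ici (0:ℝ), (ω ^ 2 + r ^ 2)⁻¹ ∂ν)
    (hD : ∀ ω : ℝ, 0 < ω → D ω = ω * ∫ r in Ici (0:ℝ), r / (ω ^ 2 + r ^ 2) ∂ν)
    (α : ℝ) (hα0 : 0 < α) (hα1 : α < 1)
    (l : ℝ → ℝ) (hlpos : ∀ x : ℝ, 0 < x → 0 < l x)
    (hslow : ∀ c : ℝ, 0 < c → Tendsto (fun x : ℝ => l (c * x) / l x) atTop (nhds 1))
    (hasymp : Tendsto (fun r : ℝ => (ν (Icc (0:ℝ) r)).toReal / (r ^ (1 - α) * l r))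
      atTop (nhds 1)) :
    Tendsto (fun ω : ℝ =>
        A ω / ((1 - α) * π / (2 * Real.cos (α * π / 2)) * ω ^ (1 - α) * l ω))
      atTop (nhds 1) ∧
    Tendsto (fun ω : ℝ =>
        D ω / ((1 - α) * π / (2 * Real.sin (α * π / 2)) * ω ^ (1 - α) * l ω))
      atTop (nhds 1) := by
  have hAν := tendsto_setIntegral_Ici_comp_div_div_rpow_mul hν hα0 hα1 hlpos hslow hasymp
    (by fun_prop) abs_two_mul_div_one_add_sq_sq_le integral_Ioi_two_mul_div_one_add_sq_sq
  have hDν := tendsto_setIntegral_Ici_comp_div_div_rpow_mul hν hα0 hα1 hlpos hslow hasymp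
    (by fun_prop) abs_sq_sub_one_div_one_add_sq_sq_le integral_Ioi_sq_sub_one_div_one_add_sq_sq
  rw [integral_Ioi_two_mul_div_one_add_sq_sq_mul_rpow (by linarith) hα1] at hAν
  rw [integral_Ioi_sq_sub_one_div_one_add_sq_sq_mul_rpow hα0 (by linarith)] at hDν
  have hcos : 0 < cos (α * π / 2) :=
    cos_pos_of_mem_Ioo ⟨by nlinarith [pi_pos], by nlinarith [pi_pos]⟩
  have hsin : 0 < sin (α * π / 2) := sin_pos_of_pos_of_lt_pi (by positivity) (by nlinarith [pi_pos])
  constructor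
  · refine tendsto_div_const_mul_mul
      (div_pos (mul_pos (by linarith) pi_pos) (by positivity)).ne' (hAν.congr' ?_)
    filter_upwards [eventually_gt_atTop 0] with ω hω
    rw [hA ω hω, ← integral_const_mul]
    congr 2 with r
    field_simp
  · refine tendsto_div_const_mul_mul
      (div_pos (mul_pos (by linarith) pi_pos) (by positivity)).ne' (hDν.congr' ?_)
    filter_upwards [eventually_gt_atTop 0] with ω hω
    rw [hD ω hω, ← integral_const_mul]
    congr 2 with r
    field_simp
end
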